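/- arXiv:0801.0738 — 4 statements merged into one kernel-verified Lean document; each statement's English description precedes it below -/
import Mathlib

section
/- Let r ≥ 5 be an odd integer and A = exp(2πi/(4r)). Set μ = (2/√r)·sin(π/r) and let x = μ · |(A^(−4) − A^(2(r−1))) · i^(r(r−1)/2) · √r| / |A² − A^(−2)|². Then x = cos(π/(2r)) / sin(π/r). -/
/-!
With `A = exp (I t)`, `t = π / (2 r)`, both differences are chords of the unit circle,
`‖A ^ m - A ^ n‖ = 2 |sin ((m - n) t / 2)|`. Since `A ^ (2 r) = -1`, the numerator is
`‖A ^ (-4) + A ^ (-2)‖ = 2 cos t`, the denominator is `2 sin (2 t) = 2 sin (π / r)`, and `|i ^ k| = 1`;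
the factors `√r` and one power of `2 sin (π / r)` cancel.
-/

open Complex

theorem Complex.norm_exp_I_mul_ofReal_sub_exp_I_mul_ofReal (a b : ℝ) :
    ‖exp (I * a) - exp (I * b)‖ = ‖2 * Real.sin ((a - b) / 2)‖ := by
  have h : exp (I * a) - exp (I * b) = exp (I * b) * (exp (I * ↑(a - b)) - 1) := by
    rw [mul_sub, ← exp_add]
    push_cast
    ring_nf
  rw [h, norm_mul, mul_comm I, norm_exp_ofReal_mul_I, one_mul, norm_exp_I_mul_ofReal_sub_one]

theorem Complex.exp_I_mul_ofReal_zpow (t : ℝ) (n : ℤ) :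
    exp (I * t) ^ n = exp (I * ↑(n * t)) := by
  rw [← exp_int_mul]
  push_cast
  ring_nf

theorem Complex.norm_exp_I_mul_ofReal_zpow_sub_zpow (t : ℝ) (m n : ℤ) :
    ‖exp (I * t) ^ m - exp (I * t) ^ n‖ = ‖2 * Real.sin ((m - n) * t / 2)‖ := by
  rw [exp_I_mul_ofReal_zpow, exp_I_mul_ofReal_zpow,
    norm_exp_I_mul_ofReal_sub_exp_I_mul_ofReal, sub_mul]

theorem stmt5_general (r : ℕ) (hr : 5 ≤ r)
    (A : ℂ) (hA : A = Complex.exp (2 * Real.pi * Complex.I / (4 * r)))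
    (μ : ℝ) (hμ : μ = (2 / Real.sqrt r) * Real.sin (Real.pi / r))
    (x : ℝ)
    (hx : x = μ * ‖(A ^ (-4 : ℤ) - A ^ (2 * (r - 1))) *
            Complex.I ^ (r * (r - 1) / 2) * (Real.sqrt r : ℂ)‖
          / ‖A ^ 2 - A ^ (-2 : ℤ)‖ ^ 2) :
    x = Real.cos (Real.pi / (2 * r)) / Real.sin (Real.pi / r) := by
  have hr0 : (0 : ℝ) < r := by positivity
  set t := Real.pi / (2 * r) with ht
  have h2t : 2 * t = Real.pi / r := by rw [ht]; field_simp
  have hA' : A = exp (I * t) := by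
    rw [hA, ht]; congr 1; push_cast; field_simp; ring
  have hcos : 0 ≤ Real.cos t := Real.cos_nonneg_of_neg_pi_div_two_le_of_le
    (by linarith [show 0 < t by positivity, Real.pi_pos])
    (div_le_div_of_nonneg_left Real.pi_pos.le two_pos (by norm_cast; omega))
  have hsin : 0 < Real.sin (Real.pi / r) := Real.sin_pos_of_pos_of_lt_pi (by positivity)
    (div_lt_self Real.pi_pos (by norm_cast; omega))
  have hnum : ‖A ^ (-4 : ℤ) - A ^ (2 * (r - 1))‖ = 2 * Real.cos t := by
    rw [← zpow_natCast, hA', norm_exp_I_mul_ofReal_zpow_sub_zpow]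
    push_cast [Nat.cast_sub (by omega : 1 ≤ r)]
    rw [show (-4 - 2 * ((r : ℝ) - 1)) * t / 2 = -(t + Real.pi / 2) by rw [ht]; field_simp; ring,
      Real.sin_neg, Real.sin_add_pi_div_two, mul_neg, norm_neg, Real.norm_of_nonneg (by positivity)]
  have hden : ‖A ^ 2 - A ^ (-2 : ℤ)‖ = 2 * Real.sin (Real.pi / r) := by
    rw [← zpow_natCast, hA', norm_exp_I_mul_ofReal_zpow_sub_zpow]
    push_cast
    rw [show (2 - -2 : ℝ) * t / 2 = Real.pi / r by rw [← h2t]; ring,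
      Real.norm_of_nonneg (by positivity)]
  rw [hx, hμ, norm_mul, norm_mul, hnum, hden, norm_pow, Complex.norm_I, one_pow, mul_one,
    norm_real, Real.norm_of_nonneg (Real.sqrt_nonneg _)]
  have : Real.sqrt r ≠ 0 := (Real.sqrt_pos.mpr hr0).ne'
  field_simp

theorem stmt5 (r : ℕ) (hr : 5 ≤ r) (hodd : Odd r)
    (A : ℂ) (hA : A = Complex.exp (2 * Real.pi * Complex.I / (4 * r)))
    (μ : ℝ) (hμ : μ = (2 / Real.sqrt r) * Real.sin (Real.pi / r))
    (x : ℝ)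
    (hx : x = μ * ‖(A ^ (-4 : ℤ) - A ^ (2 * (r - 1))) *
            Complex.I ^ (r * (r - 1) / 2) * (Real.sqrt r : ℂ)‖
          / ‖A ^ 2 - A ^ (-2 : ℤ)‖ ^ 2) :
    x = Real.cos (Real.pi / (2 * r)) / Real.sin (Real.pi / r) :=
  stmt5_general r hr A hA μ hμ x hx
end

section
/- For every real number r ≥ 5, the inequality r/(4·sin²(π/r)) < (cos(π/(2r))/sin(π/r))³ holds. -/
open Real in
theorem stmt6 (r : ℝ) (hr : 5 ≤ r) :
    r / (4 * (Real.sin (Real.pi / r)) ^ 2)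
      < (Real.cos (Real.pi / (2 * r)) / Real.sin (Real.pi / r)) ^ 3 := by
  have hπ := Real.pi_pos
  have hr0 : (0:ℝ) < r := by linarith
  have hx0 : 0 < π / r := div_pos hπ hr0
  have hx5 : π / r ≤ π / 5 := div_le_div_of_nonneg_left hπ.le (by norm_num) hr
  have hxπ : π / r < π := by
    calc π / r ≤ π / 5 := hx5
    _ < π := by linarith
  have hs : 0 < Real.sin (π / r) := Real.sin_pos_of_pos_of_lt_pi hx0 hxπ
  set s := Real.sin (π / r) with hsdef
  set c := Real.cos (π / (2 * r)) with hcdef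
  -- r * s < π
  have hsin_lt : s < π / r := Real.sin_lt hx0
  have h1 : r * s < π := by
    have := mul_lt_mul_of_pos_left hsin_lt hr0
    rwa [mul_div_cancel₀ _ (ne_of_gt hr0)] at this
  -- cos lower bound
  have hy : π / (2 * r) ≤ π / 10 := by
    rw [div_le_div_iff₀ (by positivity) (by norm_num)]
    nlinarith
  have hc1 : 1 - (π / (2 * r)) ^ 2 / 2 ≤ c := Real.one_sub_sq_div_two_le_cos
  have hπlt : π < 3.15 := by linarith [Real.pi_lt_d2]
  have hy' : (0:ℝ) < π / (2 * r) := by positivity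
  have hc2 : (0.95 : ℝ) < c := by nlinarith
  have h2 : π < 4 * c ^ 3 := by
    have : (0.95:ℝ)^3 < c^3 := pow_lt_pow_left₀ hc2 (by norm_num) (by norm_num)
    nlinarith
  rw [div_pow, div_lt_div_iff₀ (by positivity) (by positivity)]
  nlinarith [sq_nonneg s, mul_pos hs hs]
end

section
/- Let r be an odd prime and A = exp(2πi/(4r)). Then the complex number μ · (−A³·(∑_{k=0}^{r−1} A^(−4k²) − (1/2)·∑_{k=0}^{4r−1} A^(−k²)))/(A² − A^(−2)), where μ = (2/√r)·sin(π/r), has absolute value 1. -/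
/-!
Put `ζ = A⁻⁴`, a primitive `r`-th root of unity, and let `ψ` be the additive character
of `ZMod r` with `ψ 1 = ζ`. Splitting the `4r`-term sum by the parity of `k`, the even terms
give twice the first sum and the odd terms give `2 A⁻¹ T` with `T = ∑ₓ ψ (x² + x)`, so the
numerator collapses to `A² T`. As `2` is invertible mod `r`, the usual squaring argument
gives `|T|² = r`, and `|A² - A⁻²| = 2 sin (π / r)`; the normalisation `μ` cancels both.
-/

open Finset Complex

theorem Finset.sum_range_two_mul {M : Type*} [AddCommMonoid M] (f : ℕ → M) (n : ℕ) :
    ∑ k ∈ range (2 * n), f k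
      = ∑ k ∈ range n, f (2 * k) + ∑ k ∈ range n, f (2 * k + 1) := by
  induction n with
  | zero => simp
  | succ n ih =>
    rw [show 2 * (n + 1) = 2 * n + 1 + 1 by ring, sum_range_succ, sum_range_succ, ih,
      sum_range_succ, sum_range_succ]
    abel

namespace ZMod

variable {M : Type*} [AddCommMonoid M] {n : ℕ} [NeZero n]

theorem sum_range_natCast (f : ZMod n → M) : ∑ k ∈ range n, f k = ∑ x, f x :=
  sum_nbij' (↑) val (by simp) (by simp [val_lt]) (fun k hk ↦ val_cast_of_lt (mem_range.1 hk))
    (fun x _ ↦ natCast_zmod_val x) (fun _ _ ↦ rfl)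

theorem sum_range_mul_natCast (m : ℕ) (f : ZMod n → M) :
    ∑ k ∈ range (m * n), f k = m • ∑ x, f x := by
  induction m with
  | zero => simp
  | succ m ih =>
    rw [add_mul, one_mul, sum_range_add, ih, succ_nsmul, ← sum_range_natCast]
    simp

end ZMod

theorem AddChar.norm_sum_quadratic_sq {R K : Type*} [CommRing R] [Fintype R] [RCLike K]
    {ψ : AddChar R K} (hψ : ψ.IsPrimitive) {a : R} (ha : IsUnit (2 * a)) (b : R) :
    ‖∑ x, ψ (a * x ^ 2 + b * x)‖ ^ 2 = Fintype.card R := by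
  classical
  set q : R → R := fun x ↦ a * x ^ 2 + b * x
  -- For `x = d + y`, `q x - q y` is affine in `y` with slope `2 a d`, so summing over `y`
  -- kills every `d ≠ 0`.
  have hshift (d y : R) : ψ (q (d + y)) * ψ (-q y) = ψ (q d) * ψ (y * (2 * a * d)) := by
    rw [← map_add_eq_mul, ← map_add_eq_mul]
    congr 1
    ring
  have hmul_conj : (∑ x, ψ (q x)) * (starRingEnd K) (∑ x, ψ (q x)) = Fintype.card R :=
    calc (∑ x, ψ (q x)) * (starRingEnd K) (∑ x, ψ (q x))
        = ∑ y, ∑ x, ψ (q x) * ψ (-q y) := by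
          simp only [map_sum, ← map_neg_eq_conj, sum_mul_sum]
          exact sum_comm
      _ = ∑ y, ∑ d, ψ (q d) * ψ (y * (2 * a * d)) := by
          exact sum_congr rfl fun y _ ↦
            (Fintype.sum_equiv (Equiv.addRight y) _ _ fun d ↦ (hshift d y).symm).symm
      _ = ∑ d, ψ (q d) * if 2 * a * d = 0 then (Fintype.card R : K) else 0 := by
          rw [sum_comm]
          simp only [← mul_sum, sum_mulShift _ hψ, Nat.cast_ite, Nat.cast_zero]
      _ = Fintype.card R := by
          simp [ha.mul_right_eq_zero, q]
  rw [RCLike.mul_conj] at hmul_conj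
  exact_mod_cast hmul_conj

section QuadraticExponentSums

variable {K : Type*} [Field K] {r : ℕ} {A : K} {ψ : AddChar (ZMod r) K}

theorem zpow_neg_four_mul_natCast (hψ : ψ 1 = (A ^ 4)⁻¹) (n : ℕ) :
    A ^ (-(4 * (n : ℤ))) = ψ n := by
  rw [← nsmul_one (A := ZMod r) n, AddChar.map_nsmul_eq_pow, hψ, inv_pow, ← pow_mul, zpow_neg,
    ← zpow_natCast]
  push_cast
  rfl

theorem sum_range_zpow_neg_four_mul_sq [NeZero r] (hψ : ψ 1 = (A ^ 4)⁻¹) :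
    ∑ k ∈ range r, A ^ (-(4 * (k : ℤ) ^ 2)) = ∑ x, ψ (x ^ 2) := by
  rw [← ZMod.sum_range_natCast]
  refine sum_congr rfl fun k _ ↦ ?_
  rw [← Nat.cast_pow, zpow_neg_four_mul_natCast hψ, Nat.cast_pow]

theorem sum_range_four_mul_zpow_neg_sq [NeZero r] (hA : A ≠ 0) (hψ : ψ 1 = (A ^ 4)⁻¹) :
    ∑ k ∈ range (4 * r), A ^ (-((k : ℤ) ^ 2))
      = 2 * ∑ x, ψ (x ^ 2) + 2 * A⁻¹ * ∑ x, ψ (x ^ 2 + x) := by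
  have heven (k : ℕ) : A ^ (-(((2 * k : ℕ) : ℤ) ^ 2)) = ψ ((k : ZMod r) ^ 2) := by
    rw [show -(((2 * k : ℕ) : ℤ) ^ 2) = -(4 * ((k ^ 2 : ℕ) : ℤ)) by push_cast; ring,
      zpow_neg_four_mul_natCast hψ, Nat.cast_pow]
  have hodd (k : ℕ) :
      A ^ (-(((2 * k + 1 : ℕ) : ℤ) ^ 2)) = A⁻¹ * ψ ((k : ZMod r) ^ 2 + k) := by
    rw [show -(((2 * k + 1 : ℕ) : ℤ) ^ 2) = -1 + -(4 * ((k ^ 2 + k : ℕ) : ℤ)) by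
        push_cast; ring,
      zpow_add₀ hA, zpow_neg_four_mul_natCast hψ, zpow_neg_one]
    push_cast
    rfl
  rw [show 4 * r = 2 * (2 * r) by ring, sum_range_two_mul]
  simp only [heven, hodd, ← mul_sum]
  rw [ZMod.sum_range_mul_natCast 2 fun x ↦ ψ (x ^ 2),
    ZMod.sum_range_mul_natCast 2 fun x ↦ ψ (x ^ 2 + x)]
  simp only [nsmul_eq_mul, Nat.cast_ofNat]
  ring

theorem neg_pow_three_mul_sum_sub_half_sum [NeZero r] (h2 : (2 : K) ≠ 0) (hA : A ≠ 0)
    (hψ : ψ 1 = (A ^ 4)⁻¹) :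
    -A ^ 3 * ((∑ k ∈ range r, A ^ (-(4 * (k : ℤ) ^ 2)))
        - (1 / 2) * ∑ k ∈ range (4 * r), A ^ (-((k : ℤ) ^ 2)))
      = A ^ 2 * ∑ x, ψ (x ^ 2 + x) := by
  rw [sum_range_zpow_neg_four_mul_sq hψ, sum_range_four_mul_zpow_neg_sq hA hψ]
  field_simp
  ring

end QuadraticExponentSums

theorem Complex.exp_mul_I_sq_sub_zpow_neg_two (θ : ℝ) :
    exp (θ * I) ^ 2 - exp (θ * I) ^ (-2 : ℤ) = 2 * Real.sin (2 * θ) * I := by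
  rw [zpow_neg, zpow_ofNat, ← exp_nat_mul, ← exp_neg, ofReal_sin,
    show ((2 : ℕ) : ℂ) * (θ * I) = ((2 * θ : ℝ) : ℂ) * I by push_cast; ring, ← neg_mul]
  linear_combination (-I) * two_sin ((2 * θ : ℝ) : ℂ)
    + (exp ((2 * θ : ℝ) * I) - exp (-(2 * θ : ℝ) * I)) * I_sq

theorem stmt8 (r : ℕ) (hp : r.Prime) (hodd : Odd r)
    (A : ℂ) (hA : A = Complex.exp (2 * Real.pi * Complex.I / (4 * r)))
    (μ : ℝ) (hμ : μ = (2 / Real.sqrt r) * Real.sin (Real.pi / r)) :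
    ‖(μ : ℂ) * (-A ^ 3 *
        ((∑ k ∈ Finset.range r, A ^ (-(4 * (k : ℤ) ^ 2)))
          - (1 / 2) * ∑ k ∈ Finset.range (4 * r), A ^ (-((k : ℤ) ^ 2))))
      / (A ^ 2 - A ^ (-2 : ℤ))‖ = 1 := by
  have : NeZero r := ⟨hp.ne_zero⟩
  have hAθ : A = exp ((Real.pi / (2 * r) : ℝ) * I) := by
    rw [hA]
    congr 1
    push_cast
    ring
  have hζ : IsPrimitiveRoot (A ^ 4)⁻¹ r := by
    rw [hA, ← exp_nat_mul,
      show ((4 : ℕ) : ℂ) * (2 * Real.pi * I / (4 * r)) = 2 * Real.pi * I / r by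
        push_cast; field_simp]
    exact (isPrimitiveRoot_exp r hp.ne_zero).inv
  let ψ := AddChar.zmodChar r hζ.pow_eq_one
  have hψ : ψ 1 = (A ^ 4)⁻¹ := by simpa using AddChar.zmodChar_apply' hζ.pow_eq_one 1
  have hT : ‖∑ x, ψ (x ^ 2 + x)‖ = Real.sqrt r := by
    have h2 : IsUnit (2 * 1 : ZMod r) := by
      simpa using (ZMod.isUnit_iff_coprime 2 r).2 (Nat.coprime_two_left.2 hodd)
    have hsq := AddChar.norm_sum_quadratic_sq
      (AddChar.zmodChar_primitive_of_primitive_root r hζ) h2 1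
    simp only [one_mul, ZMod.card] at hsq
    rw [← hsq, Real.sqrt_sq (norm_nonneg _)]
  have hsin : 0 < Real.sin (Real.pi / r) :=
    Real.sin_pos_of_pos_of_lt_pi (div_pos Real.pi_pos (by exact_mod_cast hp.pos))
      (div_lt_self Real.pi_pos (by exact_mod_cast hp.one_lt))
  have hsqrt : 0 < Real.sqrt r := Real.sqrt_pos.2 (by exact_mod_cast hp.pos)
  rw [neg_pow_three_mul_sum_sub_half_sum two_ne_zero (hAθ ▸ exp_ne_zero _) hψ, hAθ,
    exp_mul_I_sq_sub_zpow_neg_two, show 2 * (Real.pi / (2 * r)) = Real.pi / r by field_simp,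
    norm_div, norm_mul, norm_mul, norm_pow, norm_exp_ofReal_mul_I, hT, norm_mul, norm_mul, norm_I,
    Complex.norm_two, norm_real, norm_real, Real.norm_of_nonneg hsin.le, hμ,
    Real.norm_of_nonneg (by positivity)]
  field_simp
end

section
/- Define the 'negative' continued fraction value of a nonempty list of rationals [x₀, x₁, …, xₙ] recursively by cf([x₀]) = x₀ and cf(x₀ :: rest) = x₀ − 1/cf(rest) (interpreting division in ℚ with 1/0 = 0). Then for every rational number p/q there exists a nonempty list of integers [x₀, …, xₙ] whose negative continued fraction value equals p/q. -/
/-! Strong induction on the denominator. An integer `q` is `cf [q]`. Otherwise `r = ⌈q⌉ - q`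
lies in `(0, 1)` and has the same denominator as `q`, so `r⁻¹` has denominator `r.num < r.den`;
expanding `r⁻¹` by induction gives `q = ⌈q⌉ - 1 / r⁻¹ = cf (⌈q⌉ :: l)`. -/

def cf : List ℚ → ℚ
  | [] => 0
  | [x] => x
  | x :: y :: rest => x - 1 / cf (y :: rest)

theorem cf_cons (x : ℚ) {l : List ℚ} (hl : l ≠ []) : cf (x :: l) = x - (cf l)⁻¹ := by
  obtain ⟨y, rest, rfl⟩ := List.exists_cons_of_ne_nil hl
  rw [cf, one_div]

theorem Rat.den_inv_lt_den {r : ℚ} (h0 : 0 < r) (h1 : r < 1) : r⁻¹.den < r.den := by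
  have hnum : 0 < r.num := Rat.num_pos.mpr h0
  have hlt : r.num < r.den := Rat.num_lt_denom_iff.mpr h1
  rw [Rat.den_inv_of_ne_zero h0.ne']
  omega

theorem Rat.lt_ceil_of_den_ne_one {q : ℚ} (hq : q.den ≠ 1) : q < ⌈q⌉ := by
  refine (Int.le_ceil q).lt_of_ne fun h => hq ?_
  rw [h, Rat.den_intCast]

theorem exists_cf_map_intCast_eq (q : ℚ) : ∃ l : List ℤ, l ≠ [] ∧ cf (l.map Int.cast) = q := by
  induction hd : q.den using Nat.strong_induction_on generalizing q with
  | _ d ih =>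
  by_cases hq : q.den = 1
  · exact ⟨[q.num], List.cons_ne_nil _ _, by simp [cf, Rat.coe_int_num_of_den_eq_one hq]⟩
  set r := ⌈q⌉ - q with hr
  have hr0 : 0 < r := sub_pos.mpr (Rat.lt_ceil_of_den_ne_one hq)
  have hr1 : r < 1 := by linarith [Int.ceil_lt_add_one q]
  have hrd : r⁻¹.den < d := hd ▸ Rat.intCast_sub_den ⌈q⌉ q ▸ Rat.den_inv_lt_den hr0 hr1
  obtain ⟨l, hl, hcf⟩ := ih _ hrd r⁻¹ rfl
  refine ⟨⌈q⌉ :: l, List.cons_ne_nil _ _, ?_⟩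
  rw [List.map_cons, cf_cons _ (by simpa using hl), hcf, inv_inv, hr]
  ring

theorem stmt9 (q : ℚ) :
    ∃ l : List ℤ, l ≠ [] ∧ cf (l.map (fun n => (n : ℚ))) = q := by
  -- the cast in the statement elaborates through the list monad, as `l >>= fun n => [(n : ℚ)]`
  obtain ⟨l, hl, hcf⟩ := exists_cf_map_intCast_eq q
  exact ⟨l, hl, by simpa [List.map_eq_flatMap] using hcf⟩
end
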